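/- Let α1, β2 be nonzero real constants. For smooth functions g, m : ℝ → ℝ define the vector fields on ℝ⁶ with coordinates (t,x,y,u,v,w): Y(g) = g ∂x − (x g'/(2α1))(v ∂u − u ∂v) − (x g''/(2β2 α1)) ∂w and W(m) = m (v ∂u − u ∂v) + (m'/β2) ∂w. Then for all smooth g1, g2 : ℝ → ℝ, the Lie bracket satisfies [Y(g1), Y(g2)] = W(−(1/(2α1))(g1 g2' − g2 g1')), so that the generators Y span a Kac–Moody-type subalgebra closing into the center-like generators W. -/

import Mathlib

noncomputable section

/-- ℝ⁶ with coordinates (t,x,y,u,v,w). -/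
abbrev E6 : Type := ℝ × ℝ × ℝ × ℝ × ℝ × ℝ

/-- The Lie bracket of two smooth vector fields on ℝ⁶:
[V,W](p) = DW(p)·V(p) − DV(p)·W(p). -/
def lieBracket (V W : E6 → E6) : E6 → E6 :=
  fun p => fderiv ℝ W p (V p) - fderiv ℝ V p (W p)

/-- The time-reparametrization symmetry generator X(τ) of the constant-coefficient
Davey–Stewartson system (coefficients p₁ = α₁, p₂ = α₂, q₂ = β₂, real form ψ = u+iv):
X(τ) = τ∂t + (τ'/2)(x∂x + y∂y − u∂u − v∂v − 2w∂w) + Φ(v∂u − u∂v) + (Φ_t/β₂)∂w,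
where Φ = −(x²/(8α₁) + y²/(8α₂))τ''. -/
def Xgen (α1 α2 β2 : ℝ) (τ : ℝ → ℝ) : E6 → E6 := fun p =>
  ( τ p.1,
    (deriv τ p.1 / 2) * p.2.1,
    (deriv τ p.1 / 2) * p.2.2.1,
    -(deriv τ p.1 / 2) * p.2.2.2.1
      + (-(p.2.1^2 / (8*α1) + p.2.2.1^2 / (8*α2)) * deriv (deriv τ) p.1) * p.2.2.2.2.1,
    -(-(p.2.1^2 / (8*α1) + p.2.2.1^2 / (8*α2)) * deriv (deriv τ) p.1) * p.2.2.2.1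
      - (deriv τ p.1 / 2) * p.2.2.2.2.1,
    -(deriv τ p.1) * p.2.2.2.2.2
      + (-(p.2.1^2 / (8*α1) + p.2.2.1^2 / (8*α2)) * deriv (deriv (deriv τ)) p.1) / β2 )

/-- The symmetry generator
Y(g) = g∂x − (xg'/(2α₁))(v∂u − u∂v) − (xg''/(2β₂α₁))∂w. -/
def Ygen (α1 β2 : ℝ) (g : ℝ → ℝ) : E6 → E6 := fun p =>
  ( 0,
    g p.1,
    0,
    -(p.2.1 * deriv g p.1 / (2*α1)) * p.2.2.2.2.1,
    (p.2.1 * deriv g p.1 / (2*α1)) * p.2.2.2.1,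
    -(p.2.1 * deriv (deriv g) p.1 / (2*β2*α1)) )

/-- The symmetry generator W(m) = m(v∂u − u∂v) + (m'/β₂)∂w. -/
def Wgen (β2 : ℝ) (m : ℝ → ℝ) : E6 → E6 := fun p =>
  ( 0, 0, 0,
    m p.1 * p.2.2.2.2.1,
    -(m p.1) * p.2.2.2.1,
    deriv m p.1 / β2 )

/-!
Both `Y(g)` and `W(m)` have the form `a ∂x + b (u ∂v − v ∂u) + c ∂w`. For two such fields the
quadratic terms `b₁ b₂ (u ∂u + v ∂v)` coming from the rotation parts cancel in the bracket, which
is again of this form, with coefficients `V₁ f₂ − V₂ f₁`. The fields `Y(gᵢ)` have no `∂t`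
component and coefficients affine in `x`, so `Y(g₁) f₂ = g₁ ∂ₓ f₂`: the `∂x` coefficient of the
bracket vanishes, the rotation coefficient is the Wronskian `g₁ g₂' − g₂ g₁'` over `2α₁`, and the
`∂w` coefficient involves `g₁ g₂'' − g₂ g₁''`, which is the derivative of that Wronskian.
-/

def axialField (a b c : E6 → ℝ) : E6 → E6 := fun p =>
  (0, a p, 0, -(b p) * p.2.2.2.2.1, b p * p.2.2.2.1, c p)

section axialField

variable {a b c a₁ b₁ c₁ a₂ b₂ c₂ : E6 → ℝ}

theorem fderiv_axialField_apply {p : E6} (ha : DifferentiableAt ℝ a p)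
    (hb : DifferentiableAt ℝ b p) (hc : DifferentiableAt ℝ c p) (q : E6) :
    fderiv ℝ (axialField a b c) p q =
      (0, fderiv ℝ a p q, 0,
        -(fderiv ℝ b p q * p.2.2.2.2.1 + b p * q.2.2.2.2.1),
        fderiv ℝ b p q * p.2.2.2.1 + b p * q.2.2.2.1,
        fderiv ℝ c p q) := by
  have hu := (hasFDerivAt_id (𝕜 := ℝ) p).snd.snd.snd.fst
  have hv := (hasFDerivAt_id (𝕜 := ℝ) p).snd.snd.snd.snd.fst
  have h0 := hasFDerivAt_const (𝕜 := ℝ) (0 : ℝ) p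
  have H : HasFDerivAt (axialField a b c) _ p :=
    h0.prodMk (ha.hasFDerivAt.prodMk (h0.prodMk
      ((hb.hasFDerivAt.neg.mul hv).prodMk ((hb.hasFDerivAt.mul hu).prodMk hc.hasFDerivAt))))
  rw [H.fderiv]
  ext <;> simp only [Pi.neg_apply, ContinuousLinearMap.comp_id, id_eq, smul_neg,
    ContinuousLinearMap.prod_apply, zero_apply, add_apply, neg_apply, smul_apply,
    ContinuousLinearMap.comp_apply, ContinuousLinearMap.coe_snd', ContinuousLinearMap.coe_fst',
    smul_eq_mul] <;> ring

theorem lieBracket_axialField (ha₁ : Differentiable ℝ a₁) (hb₁ : Differentiable ℝ b₁)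
    (hc₁ : Differentiable ℝ c₁) (ha₂ : Differentiable ℝ a₂) (hb₂ : Differentiable ℝ b₂)
    (hc₂ : Differentiable ℝ c₂) :
    lieBracket (axialField a₁ b₁ c₁) (axialField a₂ b₂ c₂) =
      axialField
        (fun p => fderiv ℝ a₂ p (axialField a₁ b₁ c₁ p) - fderiv ℝ a₁ p (axialField a₂ b₂ c₂ p))
        (fun p => fderiv ℝ b₂ p (axialField a₁ b₁ c₁ p) - fderiv ℝ b₁ p (axialField a₂ b₂ c₂ p))
        (fun p => fderiv ℝ c₂ p (axialField a₁ b₁ c₁ p) - fderiv ℝ c₁ p (axialField a₂ b₂ c₂ p)) := by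
  funext p
  rw [lieBracket, fderiv_axialField_apply (ha₂ p) (hb₂ p) (hc₂ p),
    fderiv_axialField_apply (ha₁ p) (hb₁ p) (hc₁ p)]
  simp only [axialField, Prod.mk_sub_mk, sub_self]
  ext <;> ring

end axialField

theorem deriv_wronskian {𝕜 : Type*} [NontriviallyNormedField 𝕜] {f g : 𝕜 → 𝕜} {t : 𝕜}
    (hf : DifferentiableAt 𝕜 f t) (hg : DifferentiableAt 𝕜 g t)
    (hf' : DifferentiableAt 𝕜 (deriv f) t) (hg' : DifferentiableAt 𝕜 (deriv g) t) :
    deriv (fun t => f t * deriv g t - g t * deriv f t) t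
      = f t * deriv (deriv g) t - g t * deriv (deriv f) t := by
  have H : HasDerivAt (fun t => f t * deriv g t - g t * deriv f t) _ t :=
    (hf.hasDerivAt.mul hg'.hasDerivAt).sub (hg.hasDerivAt.mul hf'.hasDerivAt)
  rw [H.deriv]
  ring

section coefficients

variable {h : ℝ → ℝ} {p : E6}

theorem fderiv_comp_fst_apply (hh : DifferentiableAt ℝ h p.1) (q : E6) :
    fderiv ℝ (fun p : E6 => h p.1) p q = deriv h p.1 * q.1 := by
  have H : HasFDerivAt (fun p : E6 => h p.1) _ p :=
    hh.hasDerivAt.comp_hasFDerivAt p (hasFDerivAt_fst (𝕜 := ℝ))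
  rw [H.fderiv]
  simp

theorem fderiv_snd_fst_mul_comp_fst_div_apply (hh : DifferentiableAt ℝ h p.1) (c : ℝ) (q : E6) :
    fderiv ℝ (fun p : E6 => p.2.1 * h p.1 / c) p q
      = (q.2.1 * h p.1 + p.2.1 * (deriv h p.1 * q.1)) / c := by
  have hx := (hasFDerivAt_id (𝕜 := ℝ) p).snd.fst
  have H : HasFDerivAt (fun p : E6 => p.2.1 * h p.1 / c) _ p :=
    (hx.mul (hh.hasDerivAt.comp_hasFDerivAt p (hasFDerivAt_fst (𝕜 := ℝ)))).mul_const c⁻¹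
  rw [H.fderiv]
  simp only [add_apply, smul_apply, ContinuousLinearMap.comp_apply, ContinuousLinearMap.coe_fst',
    ContinuousLinearMap.coe_snd', ContinuousLinearMap.id_apply, id_eq, Function.comp_apply,
    smul_eq_mul]
  ring

end coefficients

theorem Ygen_eq_axialField (α1 β2 : ℝ) (g : ℝ → ℝ) :
    Ygen α1 β2 g = axialField (fun p => g p.1) (fun p => p.2.1 * deriv g p.1 / (2*α1))
      (fun p => -(p.2.1 * deriv (deriv g) p.1 / (2*β2*α1))) := rfl

theorem Wgen_eq_axialField (β2 : ℝ) (m : ℝ → ℝ) :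
    Wgen β2 m = axialField (fun _ => 0) (fun p => -m p.1) (fun p => deriv m p.1 / β2) := by
  funext p
  simp [Wgen, axialField]

theorem Y_Y_commutation_general
    (α1 β2 : ℝ)
    (g1 g2 : ℝ → ℝ)
    (hg1 : ContDiff ℝ (⊤ : ℕ∞) g1) (hg2 : ContDiff ℝ (⊤ : ℕ∞) g2) :
    lieBracket (Ygen α1 β2 g1) (Ygen α1 β2 g2)
      = Wgen β2 (fun t => -(1/(2*α1)) * (g1 t * deriv g2 t - g2 t * deriv g1 t)) := by
  have hd1 : Differentiable ℝ g1 := hg1.differentiable (by simp)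
  have hd1' : Differentiable ℝ (deriv g1) := (hg1.iterate_deriv 1).differentiable (by simp)
  have hd1'' : Differentiable ℝ (deriv (deriv g1)) := (hg1.iterate_deriv 2).differentiable (by simp)
  have hd2 : Differentiable ℝ g2 := hg2.differentiable (by simp)
  have hd2' : Differentiable ℝ (deriv g2) := (hg2.iterate_deriv 1).differentiable (by simp)
  have hd2'' : Differentiable ℝ (deriv (deriv g2)) := (hg2.iterate_deriv 2).differentiable (by simp)
  rw [Ygen_eq_axialField, Ygen_eq_axialField, Wgen_eq_axialField, lieBracket_axialField
    (by fun_prop) (by fun_prop) (by fun_prop) (by fun_prop) (by fun_prop) (by fun_prop)]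
  congr 1 <;> funext p
  · simp [axialField, fderiv_comp_fst_apply, hd1 _, hd2 _]
  · simp only [axialField, fderiv_snd_fst_mul_comp_fst_div_apply (hd1' _),
      fderiv_snd_fst_mul_comp_fst_div_apply (hd2' _)]
    ring
  · simp only [axialField, fderiv_fun_neg, neg_apply,
      fderiv_snd_fst_mul_comp_fst_div_apply (hd1'' _),
      fderiv_snd_fst_mul_comp_fst_div_apply (hd2'' _), deriv_const_mul_field',
      deriv_wronskian (hd1 _) (hd2 _) (hd1' _) (hd2' _)]
    ring

/-- the Kac–Moody-type commutation relation
[Y(g₁), Y(g₂)] = W(−(1/(2α₁))(g₁g₂' − g₂g₁')). -/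
theorem Y_Y_commutation
    (α1 β2 : ℝ) (hα1 : α1 ≠ 0) (hβ2 : β2 ≠ 0)
    (g1 g2 : ℝ → ℝ)
    (hg1 : ContDiff ℝ (⊤ : ℕ∞) g1) (hg2 : ContDiff ℝ (⊤ : ℕ∞) g2) :
    lieBracket (Ygen α1 β2 g1) (Ygen α1 β2 g2)
      = Wgen β2 (fun t => -(1/(2*α1)) * (g1 t * deriv g2 t - g2 t * deriv g1 t)) :=
  Y_Y_commutation_general α1 β2 g1 g2 hg1 hg2
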